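/- arXiv:2410.22540 — 4 statements merged into one kernel-verified Lean document; each statement's English description precedes it below -/
import Mathlib

section
/- Let X and Y be countable sets, f : X → C(Y), and S ∈ C(X). Then the Kleisli extension f†(S) is a convex subset of D(Y_⊥): for all μ, ν ∈ f†(S) and p ∈ [0,1], p·μ + (1−p)·ν ∈ f†(S). -/
/-!
Write `ξᵢ = ∑ₓ μᵢ(x)·νᵢ(x)` with `μᵢ ∈ S`. The mixture `p·ξ₁ + (1-p)·ξ₂` is the Kleisli sum
over `μ := p·μ₁ + (1-p)·μ₂ ∈ S` whose component at `x` is the convex combination of `ν₁(x)`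
and `ν₂(x)` with weights `p·μ₁(x)/μ(x)` and `(1-p)·μ₂(x)/μ(x)`; it lies in `f_⊥(x)` because
every `f_⊥(x)` is convex.
-/

open scoped Classical
open Filter Topology

namespace DOL

/-- A discrete probability distribution on `X`: pointwise nonnegative with total mass 1. -/
def IsDist {X : Type*} (μ : X → ℝ) : Prop := (∀ x, 0 ≤ μ x) ∧ HasSum μ 1

/-- The point-mass (Dirac) distribution at `x`. -/
noncomputable def dirac {X : Type*} (x : X) : X → ℝ := fun y => if y = x then 1 else 0

/-- The order `⊑_D` on distributions over `X_⊥ = Option X` (with `⊥ = none`):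
pointwise comparison at proper states only. -/
def dle {X : Type*} (μ ν : Option X → ℝ) : Prop := ∀ x : X, μ (some x) ≤ ν (some x)

/-- Up-closure of a set of distributions over `X_⊥` (within `D(X_⊥)`). -/
def upClo {X : Type*} (S : Set (Option X → ℝ)) : Set (Option X → ℝ) :=
  {ν | IsDist ν ∧ ∃ μ ∈ S, dle μ ν}

/-- Convexity of a set of functions, with pointwise convex combinations. -/
def IsConvexSet {X : Type*} (S : Set (X → ℝ)) : Prop :=
  ∀ μ ∈ S, ∀ ν ∈ S, ∀ p : ℝ, 0 ≤ p → p ≤ 1 →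
    (fun x => p * μ x + (1 - p) * ν x) ∈ S

/-- Membership in `C(X)`: nonempty, consisting of distributions over `X_⊥`,
convex, (topologically) closed, and up-closed. -/
def memC {X : Type*} (S : Set (Option X → ℝ)) : Prop :=
  S.Nonempty ∧ (∀ μ ∈ S, IsDist μ) ∧ IsConvexSet S ∧ IsClosed S ∧ upClo S = S

/-- Bottom-lifting of a set-valued map: `f_⊥(⊥) = ↑{δ_⊥}`. -/
noncomputable def fbot {X Y : Type*} (f : X → Set (Option Y → ℝ)) :
    Option X → Set (Option Y → ℝ) :=
  fun x => match x with
  | some x => f x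
  | none => upClo {dirac (none : Option Y)}

/-- Kleisli extension: all convex mixtures `∑_{x ∈ supp μ} μ(x)·ν_x` with `μ ∈ S`
and `ν_x ∈ f_⊥(x)` on the support of `μ`. -/
noncomputable def kleisli {X Y : Type*} (f : X → Set (Option Y → ℝ))
    (S : Set (Option X → ℝ)) : Set (Option Y → ℝ) :=
  {ξ | ∃ μ ∈ S, ∃ ν : Option X → (Option Y → ℝ),
    (∀ x, 0 < μ x → ν x ∈ fbot f x) ∧ (∀ y, ξ y = ∑' x, μ x * ν x y)}

/-- Probabilistic choice between sets of distributions. -/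
def pchoice {X : Type*} (p : ℝ) (S T : Set (Option X → ℝ)) : Set (Option X → ℝ) :=
  {ξ | ∃ μ ∈ S, ∃ ν ∈ T, ξ = fun x => p * μ x + (1 - p) * ν x}

/-- The monad unit `η(x) = ↑{δ_x}`. -/
noncomputable def eta {X : Type*} (x : X) : Set (Option X → ℝ) := upClo {dirac (some x)}

/-- The loop characteristic functional. -/
noncomputable def Phi {St : Type*} (c : St → Set (Option St → ℝ)) (b : St → Bool)
    (f : St → Set (Option St → ℝ)) : St → Set (Option St → ℝ) :=
  fun σ => if b σ then kleisli f (c σ) else upClo {dirac (some σ)}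

lemma IsDist.le_one {X : Type*} {μ : X → ℝ} (h : IsDist μ) (x : X) : μ x ≤ 1 :=
  le_hasSum h.2 x fun j _ => h.1 j

lemma IsDist.convex_comb {X : Type*} {μ ν : X → ℝ} (hμ : IsDist μ) (hν : IsDist ν)
    {p : ℝ} (hp : 0 ≤ p) (hp1 : p ≤ 1) :
    IsDist (fun x => p * μ x + (1 - p) * ν x) := by
  refine ⟨fun x => ?_, by simpa using (hμ.2.mul_left p).add (hν.2.mul_left (1 - p))⟩
  have := hμ.1 x
  have := hν.1 x
  positivity

lemma IsDist.summable_mul {ι : Type*} {μ : ι → ℝ} (hμ : IsDist μ) {g : ι → ℝ}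
    (hg : ∀ i, 0 < μ i → 0 ≤ g i ∧ g i ≤ 1) : Summable (fun i => μ i * g i) := by
  have hbound : ∀ i, 0 ≤ μ i * g i ∧ μ i * g i ≤ μ i := by
    intro i
    rcases (hμ.1 i).eq_or_lt with h | h
    · simp [← h]
    · exact ⟨mul_nonneg h.le (hg i h).1, mul_le_of_le_one_right h.le (hg i h).2⟩
  exact .of_nonneg_of_le (fun i => (hbound i).1) (fun i => (hbound i).2) hμ.2.summable

lemma isConvexSet_upClo_singleton {X : Type*} (ρ : Option X → ℝ) :
    IsConvexSet (upClo {ρ}) := by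
  rintro μ ⟨hμ, _, hρμ', hρμ⟩ ν ⟨hν, _, hρν', hρν⟩ p hp hp1
  rw [Set.mem_singleton_iff] at hρμ' hρν'
  subst hρμ' hρν'
  refine ⟨hμ.convex_comb hν hp hp1, _, Set.mem_singleton _, fun x => ?_⟩
  have := hρμ x
  have := hρν x
  dsimp only
  nlinarith

lemma IsConvexSet.exists_mul_eq_add {X : Type*} {C : Set (X → ℝ)} (hC : IsConvexSet C)
    {a b : ℝ} (ha : 0 ≤ a) (hb : 0 ≤ b) {u v : X → ℝ} (hu : 0 < a → u ∈ C)
    (hv : 0 < b → v ∈ C) :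
    ∃ w, (0 < a + b → w ∈ C) ∧ ∀ x, (a + b) * w x = a * u x + b * v x := by
  rcases ha.eq_or_lt with rfl | ha'
  · exact ⟨v, fun h => hv (by simpa using h), fun x => by ring⟩
  rcases hb.eq_or_lt with rfl | hb'
  · exact ⟨u, fun _ => hu ha', fun x => by ring⟩
  have hab : 0 < a + b := by positivity
  refine ⟨fun x => a / (a + b) * u x + (1 - a / (a + b)) * v x,
    fun _ => hC u (hu ha') v (hv hb') _ (by positivity) ((div_le_one hab).2 (by linarith)),
    fun x => ?_⟩
  field_simp
  ring

section Kleisli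

variable {X Y : Type*} {f : X → Set (Option Y → ℝ)}

lemma isDist_of_mem_fbot (hf : ∀ x, memC (f x)) {x : Option X} {ρ : Option Y → ℝ}
    (h : ρ ∈ fbot f x) : IsDist ρ := by
  cases x with
  | some x => exact (hf x).2.1 ρ h
  | none => exact h.1

lemma isConvexSet_fbot (hf : ∀ x, memC (f x)) (x : Option X) : IsConvexSet (fbot f x) := by
  cases x with
  | some x => exact (hf x).2.2.1
  | none => exact isConvexSet_upClo_singleton _

lemma summable_kleisli_term (hf : ∀ x, memC (f x)) {μ : Option X → ℝ} (hμ : IsDist μ)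
    {ν : Option X → Option Y → ℝ} (hν : ∀ x, 0 < μ x → ν x ∈ fbot f x) (y : Option Y) :
    Summable (fun x => μ x * ν x y) :=
  hμ.summable_mul fun x hx =>
    ⟨(isDist_of_mem_fbot hf (hν x hx)).1 y, (isDist_of_mem_fbot hf (hν x hx)).le_one y⟩

end Kleisli

theorem kleisli_convex_general {X Y : Type*}
    (f : X → Set (Option Y → ℝ)) (hf : ∀ x, memC (f x))
    (S : Set (Option X → ℝ)) (hS : memC S) :
    IsConvexSet (kleisli f S) := by
  rintro ξ₁ ⟨μ₁, hμ₁S, ν₁, hν₁, hξ₁⟩ ξ₂ ⟨μ₂, hμ₂S, ν₂, hν₂, hξ₂⟩ p hp hp1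
  have hd₁ := hS.2.1 μ₁ hμ₁S
  have hd₂ := hS.2.1 μ₂ hμ₂S
  have hq : 0 ≤ 1 - p := sub_nonneg.2 hp1
  have hw : ∀ x, ∃ w, (0 < p * μ₁ x + (1 - p) * μ₂ x → w ∈ fbot f x) ∧
      ∀ y, (p * μ₁ x + (1 - p) * μ₂ x) * w y =
        p * (μ₁ x * ν₁ x y) + (1 - p) * (μ₂ x * ν₂ x y) := by
    intro x
    obtain ⟨w, hwC, hwy⟩ := (isConvexSet_fbot hf x).exists_mul_eq_add
      (mul_nonneg hp (hd₁.1 x)) (mul_nonneg hq (hd₂.1 x))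
      (fun h => hν₁ x (pos_of_mul_pos_right h hp)) (fun h => hν₂ x (pos_of_mul_pos_right h hq))
    exact ⟨w, hwC, fun y => by rw [hwy]; ring⟩
  choose ν hνC hνy using hw
  refine ⟨_, hS.2.2.1 μ₁ hμ₁S μ₂ hμ₂S p hp hp1, ν, hνC, fun y => ?_⟩
  dsimp only
  rw [hξ₁, hξ₂, ← tsum_mul_left, ← tsum_mul_left,
    ← ((summable_kleisli_term hf hd₁ hν₁ y).mul_left p).tsum_add
      ((summable_kleisli_term hf hd₂ hν₂ y).mul_left (1 - p))]
  exact tsum_congr fun x => (hνy x y).symm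

/-- the Kleisli extension `f†(S)` is convex. -/
theorem kleisli_convex {X Y : Type*} [Countable X] [Countable Y]
    (f : X → Set (Option Y → ℝ)) (hf : ∀ x, memC (f x))
    (S : Set (Option X → ℝ)) (hS : memC S) :
    IsConvexSet (kleisli f S) :=
  kleisli_convex_general f hf S hS

end DOL
end

section
/- (Monad left identity.) Let X be a countable set and let η : X → C(X) be the unit η(x) := ↑{δ_x}. Then for every S ∈ C(X), the Kleisli extension of the unit is the identity: η†(S) = S. -/
open scoped Classical
open Filter Topology

namespace DOL

/-! Each `ν_x ∈ ↑{δ_x}` has mass at least 1 at `x`, so a mixture `∑ μ(x)·ν_x` dominates `μ` on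
proper states and is again a distribution; it therefore lies in `↑S = S`. Conversely, choosing
`ν_x := δ_x` returns `μ` itself. -/

lemma isDist_dirac {X : Type*} (x : X) : IsDist (dirac x) :=
  ⟨fun y => by unfold dirac; split <;> norm_num, hasSum_ite_eq x 1⟩

lemma tsum_mul_dirac {X : Type*} (f : X → ℝ) (y : X) : ∑' x, f x * dirac x y = f y := by
  rw [tsum_eq_single y fun x hx => by simp [dirac, Ne.symm hx]]
  simp [dirac]

section Mixture

variable {α β : Type*} {μ : α → ℝ} {ν : α → β → ℝ}

lemma IsDist.hasSum_mul_prod (hμ : IsDist μ) (hν : ∀ a, IsDist (ν a)) :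
    HasSum (fun p : α × β => μ p.1 * ν p.1 p.2) 1 := by
  have hfiber : ∀ a, HasSum (fun b => μ a * ν a b) (μ a) := fun a => by
    simpa using (hν a).2.mul_left (μ a)
  have hsum : Summable fun p : α × β => μ p.1 * ν p.1 p.2 :=
    (summable_prod_of_nonneg fun p => mul_nonneg (hμ.1 _) ((hν _).1 _)).2
      ⟨fun a => (hfiber a).summable, by
        simpa only [fun a => (hfiber a).tsum_eq] using hμ.2.summable⟩
  rw [← (hsum.hasSum.prod_fiberwise hfiber).unique hμ.2]
  exact hsum.hasSum

lemma IsDist.summable_mul_apply (hμ : IsDist μ) (hν : ∀ a, IsDist (ν a)) (b : β) :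
    Summable fun a => μ a * ν a b :=
  ((Equiv.prodComm β α).hasSum_iff.2 (hμ.hasSum_mul_prod hν)).summable.prod_factor b

lemma IsDist.mixture (hμ : IsDist μ) (hν : ∀ a, IsDist (ν a)) :
    IsDist fun b => ∑' a, μ a * ν a b :=
  ⟨fun _ => tsum_nonneg fun a => mul_nonneg (hμ.1 a) ((hν a).1 _),
    ((Equiv.prodComm β α).hasSum_iff.2 (hμ.hasSum_mul_prod hν)).prod_fiberwise
      fun b => (hμ.summable_mul_apply hν b).hasSum⟩

lemma IsDist.mul_le_mixture (hμ : IsDist μ) (hν : ∀ a, IsDist (ν a)) (a : α) (b : β) :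
    μ a * ν a b ≤ ∑' a', μ a' * ν a' b :=
  (hμ.summable_mul_apply hν b).le_tsum a fun a' _ => mul_nonneg (hμ.1 a') ((hν a').1 b)

end Mixture

/-- Off the support of `μ` the family `ν` is arbitrary, so it can be completed to a total
family of elements of `f_⊥`. -/
lemma exists_total_of_mem_kleisli {X Y : Type*} {f : X → Set (Option Y → ℝ)}
    {S : Set (Option X → ℝ)} (hf : ∀ x, (f x).Nonempty) (hS : ∀ μ ∈ S, IsDist μ)
    {ξ : Option Y → ℝ} (hξ : ξ ∈ kleisli f S) :
    ∃ μ ∈ S, ∃ ν : Option X → Option Y → ℝ,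
      (∀ x, ν x ∈ fbot f x) ∧ ξ = fun y => ∑' x, μ x * ν x y := by
  obtain ⟨μ, hμS, ν, hν, hξ⟩ := hξ
  have hfbot : ∀ x, (fbot f x).Nonempty
    | none => ⟨dirac none, isDist_dirac _, dirac none, rfl, fun _ => le_rfl⟩
    | some x => hf x
  refine ⟨μ, hμS, fun x => if 0 < μ x then ν x else (hfbot x).some, fun x => ?_, ?_⟩
  · dsimp only
    split_ifs with hx
    exacts [hν x hx, (hfbot x).some_mem]
  · funext y
    rw [hξ y]
    refine tsum_congr fun x => ?_
    dsimp only
    split_ifs with hx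
    · rfl
    · simp [le_antisymm (not_lt.1 hx) ((hS μ hμS).1 x)]

lemma fbot_eta {X : Type*} (x : Option X) : fbot (fun x : X => eta x) x = upClo {dirac x} := by
  cases x <;> rfl

lemma dirac_mem_upClo_dirac {X : Type*} (x : Option X) : dirac x ∈ upClo {dirac x} :=
  ⟨isDist_dirac x, dirac x, rfl, fun _ => le_rfl⟩

lemma one_le_of_mem_upClo_dirac {X : Type*} {x : X} {ν : Option X → ℝ}
    (hν : ν ∈ upClo {dirac (some x)}) : 1 ≤ ν (some x) := by
  obtain ⟨-, _, rfl, hle⟩ := hν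
  simpa [dirac] using hle x

theorem kleisli_eta_id_general {X : Type*}
    (S : Set (Option X → ℝ)) (hS : memC S) :
    kleisli (fun x : X => eta x) S = S := by
  obtain ⟨-, hSdist, -, -, hSup⟩ := hS
  refine Set.Subset.antisymm ?_ fun ξ hξ =>
    ⟨ξ, hξ, dirac, fun x _ => by rw [fbot_eta]; exact dirac_mem_upClo_dirac x,
      fun y => (tsum_mul_dirac ξ y).symm⟩
  intro ξ hξ
  obtain ⟨μ, hμS, ν, hν, rfl⟩ :=
    exists_total_of_mem_kleisli (fun x => ⟨_, dirac_mem_upClo_dirac _⟩) hSdist hξ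
  replace hν : ∀ x, ν x ∈ upClo {dirac x} := fun x => fbot_eta x ▸ hν x
  have hμ := hSdist μ hμS
  have hνdist : ∀ x, IsDist (ν x) := fun x => (hν x).1
  rw [← hSup]
  refine ⟨hμ.mixture hνdist, μ, hμS, fun z => ?_⟩
  calc μ (some z) ≤ μ (some z) * ν (some z) (some z) :=
        le_mul_of_one_le_right (hμ.1 _) (one_le_of_mem_upClo_dirac (hν _))
    _ ≤ ∑' x, μ x * ν x (some z) := hμ.mul_le_mixture hνdist _ _

/-- monad left identity: `η†(S) = S` for `S ∈ C(X)`. -/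
theorem kleisli_eta_id {X : Type*} [Countable X]
    (S : Set (Option X → ℝ)) (hS : memC S) :
    kleisli (fun x : X => eta x) S = S :=
  kleisli_eta_id_general S hS

end DOL
end

section
/- Let X, Y, Z be countable sets, μ ∈ D(X), let (ν_x)_{x∈supp(μ)} be a family with each ν_x ∈ D(Y), and let (S_y)_{y∈Y} be a family with each S_y ∈ C(Z). Then the following two subsets of D(Z_⊥) are equal: { ∑_{x∈supp(μ)} μ(x) · ∑_{y∈supp(ν_x)} ν_x(y) · ν'_{x,y} : ν'_{x,y} ∈ S_y for all x ∈ supp(μ) and y ∈ supp(ν_x) } and { ∑_{y∈Y} (∑_{x∈supp(μ)} μ(x)·ν_x)(y) · ν'_y : ν'_y ∈ S_y for all y ∈ Y }. -/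
/-!
Both sets are mixtures against the joint weights `κ(x,y) = μ(x) ν_x(y)`, summed in different
orders, and Fubini for the summable family `κ` against bounded integrands swaps the orders.
From left to right, the selections `ν'_{x,y}` are collapsed, for each `y` of positive weight
`w(y) = ∑_x κ(x,y)`, into the normalised mixture `∑_x (κ(x,y) / w(y)) ν'_{x,y}`, which stays in
`S_y` because a closed convex set is closed under countable convex combinations. From right to
left, take `ν'_{x,y} := ν'_y`.
-/

open scoped Classical
open Filter Topology

namespace DOL

lemma IsDist.abs_le_one {X : Type*} {μ : X → ℝ} (h : IsDist μ) (x : X) : |μ x| ≤ 1 :=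
  abs_le.2 ⟨by linarith [h.1 x], le_hasSum h.2 x fun j _ => h.1 j⟩

lemma IsConvexSet.convex {X : Type*} {S : Set (X → ℝ)} (h : IsConvexSet S) : Convex ℝ S := by
  intro a ha b hb p q hp _ hpq
  obtain rfl : q = 1 - p := by linarith
  convert h a ha b hb p hp (by linarith) using 1
  ext x
  simp

/-- The partial center masses lie in `S` and converge to the series, so closedness passes
the finite statement to the limit. -/
theorem _root_.Convex.tsum_smul_mem {ι E : Type*} [AddCommGroup E] [Module ℝ E]
    [TopologicalSpace E] [ContinuousAdd E] [ContinuousSMul ℝ E] {S : Set E}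
    (hconv : Convex ℝ S) (hcl : IsClosed S) {p : ι → ℝ} (hp : ∀ i, 0 ≤ p i) (hp1 : HasSum p 1)
    {s : ι → E} (hs : ∀ i, s i ∈ S) (hsum : Summable fun i => p i • s i) :
    ∑' i, p i • s i ∈ S := by
  have hmass : ∀ᶠ F : Finset ι in atTop, 0 < ∑ i ∈ F, p i :=
    hp1.eventually (eventually_gt_nhds one_pos)
  have hlim : Tendsto (fun F : Finset ι => F.centerMass p s) atTop (𝓝 (∑' i, p i • s i)) := by
    have := (hp1.inv₀ one_ne_zero).smul hsum.hasSum
    rwa [inv_one, one_smul] at this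
  exact hcl.mem_of_tendsto hlim <| hmass.mono fun F hF =>
    hconv.centerMass_mem (fun i _ => hp i) hF fun i _ => hs i

lemma summable_smul_of_isDist {ι Z : Type*} {p : ι → ℝ} (hp : Summable p) {s : ι → Z → ℝ}
    (hs : ∀ i, IsDist (s i)) : Summable fun i => p i • s i :=
  Pi.summable.2 fun z => hp.abs.of_norm_bounded fun i => by
    simpa [abs_mul] using mul_le_of_le_one_right (abs_nonneg (p i)) ((hs i).abs_le_one z)

lemma tsum_comm_mul_of_abs_le {X Y : Type*} {κ : X → Y → ℝ}
    (hκ : Summable (Function.uncurry κ)) {f : X → Y → ℝ} {C : ℝ} (hf : ∀ x y, |f x y| ≤ C) :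
    ∑' x, ∑' y, κ x y * f x y = ∑' y, ∑' x, κ x y * f x y := by
  refine (Summable.tsum_comm ?_).symm
  refine (hκ.abs.mul_right C).of_norm_bounded fun p => ?_
  rw [Real.norm_eq_abs, Function.uncurry_apply_pair, abs_mul]
  exact mul_le_mul_of_nonneg_left (hf p.1 p.2) (abs_nonneg _)

/-- `ρ` is the normalised mixture `∑ (q i / ∑ q) • t i`, or any element of `S` when `∑ q = 0`. -/
lemma exists_mem_tsum_mul_eq {ι Z : Type*} {S : Set (Z → ℝ)} (hne : S.Nonempty)
    (hdist : ∀ ρ ∈ S, IsDist ρ) (hconv : IsConvexSet S) (hcl : IsClosed S) {q : ι → ℝ}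
    (hq : ∀ i, 0 ≤ q i) (hqs : Summable q) {t : ι → Z → ℝ} (ht : ∀ i, t i ∈ S) :
    ∃ ρ ∈ S, ∀ z, (∑' i, q i) * ρ z = ∑' i, q i * t i z := by
  set W := ∑' i, q i
  rcases (tsum_nonneg hq : 0 ≤ W).eq_or_lt with hW | hW
  · obtain ⟨ρ, hρ⟩ := hne
    have hq0 : ∀ i, q i = 0 := fun i => le_antisymm (hW ▸ hqs.le_tsum i fun j _ => hq j) (hq i)
    exact ⟨ρ, hρ, fun z => by simp [W, hq0]⟩
  · have hW0 : W ≠ 0 := hW.ne'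
    have hsum : Summable fun i => (q i / W) • t i :=
      summable_smul_of_isDist (hqs.div_const W) fun i => hdist _ (ht i)
    have hq1 : HasSum (fun i => q i / W) 1 := by
      simpa only [W, div_self hW0] using hqs.hasSum.div_const W
    refine ⟨_, hconv.convex.tsum_smul_mem hcl (fun i => div_nonneg (hq i) hW.le) hq1 ht hsum,
      fun z => ?_⟩
    rw [tsum_apply hsum, ← tsum_mul_left]
    refine tsum_congr fun i => ?_
    rw [Pi.smul_apply, smul_eq_mul]
    field_simp

section Mixture

variable {X Y : Type*} {μ : X → ℝ} {ν : X → Y → ℝ}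

lemma tsum_mul_eq_of_isDist (hμ : IsDist μ) (hν : ∀ x, 0 < μ x → IsDist (ν x)) (x : X) :
    ∑' y, μ x * ν x y = μ x := by
  rcases (hμ.1 x).eq_or_lt with h | h
  · simp [← h]
  · rw [tsum_mul_left, (hν x h).2.tsum_eq, mul_one]

lemma mul_nonneg_of_isDist (hμ : IsDist μ) (hν : ∀ x, 0 < μ x → IsDist (ν x)) (x : X) (y : Y) :
    0 ≤ μ x * ν x y := by
  rcases (hμ.1 x).eq_or_lt with h | h
  · simp [← h]
  · exact mul_nonneg h.le ((hν x h).1 y)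

lemma summable_joint (hμ : IsDist μ) (hν : ∀ x, 0 < μ x → IsDist (ν x)) :
    Summable (Function.uncurry fun x y => μ x * ν x y) := by
  have hrow : ∀ x, Summable fun y => μ x * ν x y := fun x => by
    rcases (hμ.1 x).eq_or_lt with h | h
    · simp [← h]
    · exact (hν x h).2.summable.mul_left (μ x)
  refine (summable_prod_of_nonneg fun p => mul_nonneg_of_isDist hμ hν p.1 p.2).2 ⟨hrow, ?_⟩
  simpa only [Function.uncurry_apply_pair, tsum_mul_eq_of_isDist hμ hν] using hμ.2.summable

lemma tsum_mul_tsum_mul_comm (hμ : IsDist μ) (hν : ∀ x, 0 < μ x → IsDist (ν x))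
    {f : X → Y → ℝ} {C : ℝ} (hf : ∀ x y, |f x y| ≤ C) :
    ∑' x, μ x * ∑' y, ν x y * f x y = ∑' y, ∑' x, μ x * ν x y * f x y := by
  simp_rw [← tsum_mul_left, ← mul_assoc]
  exact tsum_comm_mul_of_abs_le (summable_joint hμ hν) hf

lemma exists_total_selection {Z : Type*} (hμ : IsDist μ) (hν : ∀ x, 0 < μ x → IsDist (ν x))
    {S : Y → Set (Z → ℝ)} (hne : ∀ y, (S y).Nonempty) (ν' : X → Y → Z → ℝ)
    (hν' : ∀ x y, 0 < μ x → 0 < ν x y → ν' x y ∈ S y) :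
    ∃ t : X → Y → Z → ℝ, (∀ x y, t x y ∈ S y) ∧
      ∀ x z, μ x * ∑' y, ν x y * ν' x y z = μ x * ∑' y, ν x y * t x y z := by
  refine ⟨fun x y => if 0 < μ x ∧ 0 < ν x y then ν' x y else (hne y).some,
    fun x y => ?_, fun x z => ?_⟩
  · dsimp only
    split_ifs with h
    exacts [hν' x y h.1 h.2, (hne y).some_mem]
  · rcases (hμ.1 x).eq_or_lt with h0 | hx
    · simp [← h0]
    · refine congrArg _ (tsum_congr fun y => ?_)
      rcases ((hν x hx).1 y).eq_or_lt with h0 | hy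
      · simp [← h0]
      · simp [hx, hy]

end Mixture

theorem convex_mix_assoc_general {X Y Z : Type*}
    (μ : X → ℝ) (hμ : IsDist μ)
    (ν : X → Y → ℝ) (hν : ∀ x, 0 < μ x → IsDist (ν x))
    (S : Y → Set (Option Z → ℝ)) (hS : ∀ y, memC (S y)) :
    {ξ : Option Z → ℝ | ∃ ν' : X → Y → (Option Z → ℝ),
        (∀ x y, 0 < μ x → 0 < ν x y → ν' x y ∈ S y) ∧
        (∀ z, ξ z = ∑' x, μ x * ∑' y, ν x y * ν' x y z)} =
    {ξ : Option Z → ℝ | ∃ ν' : Y → (Option Z → ℝ),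
        (∀ y, ν' y ∈ S y) ∧
        (∀ z, ξ z = ∑' y, (∑' x, μ x * ν x y) * ν' y z)} := by
  ext ξ
  constructor
  · rintro ⟨ν', hν'S, hξ⟩
    obtain ⟨t, htS, hνt⟩ := exists_total_selection hμ hν (fun y => (hS y).1) ν' hν'S
    have hjoint := summable_joint hμ hν
    choose ρ hρS hρ using fun y =>
      exists_mem_tsum_mul_eq (hS y).1 (hS y).2.1 (hS y).2.2.1 (hS y).2.2.2.1
        (mul_nonneg_of_isDist hμ hν · y) (hjoint.prod_symm.prod_factor y) (htS · y)
    refine ⟨ρ, hρS, fun z => ?_⟩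
    have ht_bound : ∀ x y, |t x y z| ≤ 1 := fun x y => ((hS y).2.1 _ (htS x y)).abs_le_one z
    rw [hξ z]
    simp_rw [hνt _ z, tsum_mul_tsum_mul_comm hμ hν ht_bound, hρ]
  · rintro ⟨ν', hν'S, hξ⟩
    refine ⟨fun _ => ν', fun _ y _ _ => hν'S y, fun z => ?_⟩
    rw [hξ z, tsum_mul_tsum_mul_comm hμ hν fun _ y => ((hS y).2.1 _ (hν'S y)).abs_le_one z]
    simp_rw [← tsum_mul_right]

/-- associativity of convex mixtures of convex sets. -/
theorem convex_mix_assoc {X Y Z : Type*} [Countable X] [Countable Y] [Countable Z]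
    (μ : X → ℝ) (hμ : IsDist μ)
    (ν : X → Y → ℝ) (hν : ∀ x, 0 < μ x → IsDist (ν x))
    (S : Y → Set (Option Z → ℝ)) (hS : ∀ y, memC (S y)) :
    {ξ : Option Z → ℝ | ∃ ν' : X → Y → (Option Z → ℝ),
        (∀ x y, 0 < μ x → 0 < ν x y → ν' x y ∈ S y) ∧
        (∀ z, ξ z = ∑' x, μ x * ∑' y, ν x y * ν' x y z)} =
    {ξ : Option Z → ℝ | ∃ ν' : Y → (Option Z → ℝ),
        (∀ y, ν' y ∈ S y) ∧
        (∀ z, ξ z = ∑' y, (∑' x, μ x * ν x y) * ν' y z)} :=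
  convex_mix_assoc_general μ hμ ν hν S hS

end DOL
end

section
/- (Up-closure distributes over probabilistic combination.) Let Σ be a countable set, p ∈ [0,1], and μ₁, μ₂ ∈ D(Σ_⊥). Then ↑{p·μ₁ + (1−p)·μ₂} = ↑{μ₁} ⊕_p ↑{μ₂}. -/
open scoped Classical
open Filter Topology

namespace DOL

/-! If `ν` lies above `p μ₁ + (1 - p) μ₂`, the excess `d = ν - (p μ₁ + (1 - p) μ₂)` has total
mass zero and is nonnegative on proper states, so its only negative value is at `⊥`, where it is
at least `-(p μ₁(⊥) + (1 - p) μ₂(⊥))`. Sharing it out as `νᵢ = μᵢ + cᵢ d` with `cᵢ` proportional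
to `μᵢ(⊥)` keeps both `νᵢ` distributions above `μᵢ` and recovers `ν = p ν₁ + (1 - p) ν₂`. The
other inclusion is monotonicity of mixing. -/

section

variable {X : Type*}

theorem IsDist.mix {μ ν : X → ℝ} (hμ : IsDist μ) (hν : IsDist ν) {p : ℝ} (hp0 : 0 ≤ p)
    (hp1 : p ≤ 1) : IsDist (fun x => p * μ x + (1 - p) * ν x) := by
  refine ⟨fun x => ?_, by simpa using (hμ.2.mul_left p).add (hν.2.mul_left (1 - p))⟩
  exact add_nonneg (mul_nonneg hp0 (hμ.1 x)) (mul_nonneg (sub_nonneg.2 hp1) (hν.1 x))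

theorem dle.mix {μ₁ μ₂ ν₁ ν₂ : Option X → ℝ} (h₁ : dle μ₁ ν₁) (h₂ : dle μ₂ ν₂) {p : ℝ}
    (hp0 : 0 ≤ p) (hp1 : p ≤ 1) :
    dle (fun x => p * μ₁ x + (1 - p) * μ₂ x) (fun x => p * ν₁ x + (1 - p) * ν₂ x) := fun x =>
  add_le_add (mul_le_mul_of_nonneg_left (h₁ x) hp0)
    (mul_le_mul_of_nonneg_left (h₂ x) (sub_nonneg.2 hp1))

theorem upClo_mono {S T : Set (Option X → ℝ)} (h : S ⊆ T) : upClo S ⊆ upClo T :=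
  fun _ ⟨hν, μ, hμ, hle⟩ => ⟨hν, μ, h hμ, hle⟩

theorem add_mem_upClo_singleton {μ d : Option X → ℝ} (hμ : IsDist μ) (hd : HasSum d 0)
    (hd_some : ∀ x, 0 ≤ d (some x)) (hd_none : 0 ≤ μ none + d none) :
    (fun x => μ x + d x) ∈ upClo {μ} := by
  refine ⟨⟨?_, by simpa using hμ.2.add hd⟩, μ, rfl, fun x => le_add_of_nonneg_right (hd_some x)⟩
  rintro (_ | x)
  · exact hd_none
  · exact add_nonneg (hμ.1 _) (hd_some x)

/-- The witnesses are `cᵢ = aᵢ / (p a₁ + (1 - p) a₂)`, or `cᵢ = 1` when that denominator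
vanishes (and then `δ = 0`). -/
theorem exists_weights_of_deficit {p a₁ a₂ δ : ℝ} (hp0 : 0 ≤ p) (hp1 : p ≤ 1) (ha₁ : 0 ≤ a₁)
    (ha₂ : 0 ≤ a₂) (hδ : δ ≤ 0) (hδ' : -(p * a₁ + (1 - p) * a₂) ≤ δ) :
    ∃ c₁ c₂ : ℝ, 0 ≤ c₁ ∧ 0 ≤ c₂ ∧ p * c₁ + (1 - p) * c₂ = 1 ∧
      0 ≤ a₁ + c₁ * δ ∧ 0 ≤ a₂ + c₂ * δ := by
  set M := p * a₁ + (1 - p) * a₂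
  have hM : 0 ≤ M := by have := sub_nonneg.2 hp1; positivity
  rcases hM.eq_or_lt with hM0 | hMpos
  · have hδ0 : δ = 0 := by linarith
    exact ⟨1, 1, zero_le_one, zero_le_one, by ring, by simpa [hδ0], by simpa [hδ0]⟩
  have absorbs (a : ℝ) (ha : 0 ≤ a) : 0 ≤ a + a / M * δ := by
    calc 0 ≤ a * (M + δ) / M := div_nonneg (mul_nonneg ha (by linarith)) hMpos.le
      _ = a + a / M * δ := by field_simp
  exact ⟨a₁ / M, a₂ / M, by positivity, by positivity, by field_simp; rfl,
    absorbs a₁ ha₁, absorbs a₂ ha₂⟩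

theorem exists_mix_eq_of_dle_mix {μ₁ μ₂ ν : Option X → ℝ} (h₁ : IsDist μ₁) (h₂ : IsDist μ₂)
    (hν : IsDist ν) {p : ℝ} (hp0 : 0 ≤ p) (hp1 : p ≤ 1)
    (hle : dle (fun x => p * μ₁ x + (1 - p) * μ₂ x) ν) :
    ∃ ν₁ ∈ upClo {μ₁}, ∃ ν₂ ∈ upClo {μ₂}, ν = fun x => p * ν₁ x + (1 - p) * ν₂ x := by
  set d : Option X → ℝ := fun x => ν x - (p * μ₁ x + (1 - p) * μ₂ x)
  have hd : HasSum d 0 := by simpa using hν.2.sub (h₁.mix h₂ hp0 hp1).2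
  have hd_some (x : X) : 0 ≤ d (some x) := sub_nonneg.2 (hle x)
  have hd_none : d none ≤ 0 := by
    refine le_hasSum hd none ?_
    rintro (_ | x) h
    · exact absurd rfl h
    · exact hd_some x
  obtain ⟨c₁, c₂, hc₁, hc₂, hc, hν₁, hν₂⟩ := exists_weights_of_deficit hp0 hp1 (h₁.1 none)
    (h₂.1 none) hd_none (by linarith [hν.1 none])
  have move (μ : Option X → ℝ) (hμ : IsDist μ) (c : ℝ) (hc : 0 ≤ c)
      (h : 0 ≤ μ none + c * d none) : (fun x => μ x + c * d x) ∈ upClo {μ} :=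
    add_mem_upClo_singleton hμ (by simpa using hd.mul_left c)
      (fun x => mul_nonneg hc (hd_some x)) h
  exact ⟨_, move μ₁ h₁ c₁ hc₁ hν₁, _, move μ₂ h₂ c₂ hc₂ hν₂,
    funext fun x => by linear_combination (-d x) * hc⟩

theorem upClo_pchoice_subset {S T : Set (Option X → ℝ)} (hS : ∀ μ ∈ S, IsDist μ)
    (hT : ∀ μ ∈ T, IsDist μ) {p : ℝ} (hp0 : 0 ≤ p) (hp1 : p ≤ 1) :
    upClo (pchoice p S T) ⊆ pchoice p (upClo S) (upClo T) := by
  rintro ν ⟨hν, _, ⟨μ₁, hμ₁, μ₂, hμ₂, rfl⟩, hle⟩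
  obtain ⟨ν₁, hν₁, ν₂, hν₂, rfl⟩ :=
    exists_mix_eq_of_dle_mix (hS μ₁ hμ₁) (hT μ₂ hμ₂) hν hp0 hp1 hle
  exact ⟨ν₁, upClo_mono (Set.singleton_subset_iff.2 hμ₁) hν₁,
    ν₂, upClo_mono (Set.singleton_subset_iff.2 hμ₂) hν₂, rfl⟩

theorem pchoice_upClo_subset {S T : Set (Option X → ℝ)} {p : ℝ} (hp0 : 0 ≤ p) (hp1 : p ≤ 1) :
    pchoice p (upClo S) (upClo T) ⊆ upClo (pchoice p S T) := by
  rintro _ ⟨ν₁, ⟨hν₁, μ₁, hμ₁, hle₁⟩, ν₂, ⟨hν₂, μ₂, hμ₂, hle₂⟩, rfl⟩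
  exact ⟨hν₁.mix hν₂ hp0 hp1, _, ⟨μ₁, hμ₁, μ₂, hμ₂, rfl⟩, hle₁.mix hle₂ hp0 hp1⟩

theorem upClo_pchoice {S T : Set (Option X → ℝ)} (hS : ∀ μ ∈ S, IsDist μ)
    (hT : ∀ μ ∈ T, IsDist μ) {p : ℝ} (hp0 : 0 ≤ p) (hp1 : p ≤ 1) :
    upClo (pchoice p S T) = pchoice p (upClo S) (upClo T) :=
  (upClo_pchoice_subset hS hT hp0 hp1).antisymm (pchoice_upClo_subset hp0 hp1)

theorem pchoice_singleton (p : ℝ) (μ ν : Option X → ℝ) :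
    pchoice p {μ} {ν} = {fun x => p * μ x + (1 - p) * ν x} := by
  ext ξ
  simp [pchoice]

end

theorem upClo_mix_general {St : Type*}
    (p : ℝ) (hp0 : 0 ≤ p) (hp1 : p ≤ 1)
    (μ₁ μ₂ : Option St → ℝ) (h1 : IsDist μ₁) (h2 : IsDist μ₂) :
    upClo {fun σ => p * μ₁ σ + (1 - p) * μ₂ σ} = pchoice p (upClo {μ₁}) (upClo {μ₂}) := by
  rw [← pchoice_singleton]
  exact upClo_pchoice (by simpa using h1) (by simpa using h2) hp0 hp1

/-- up-closure distributes over probabilistic combination: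
`↑{p·μ₁ + (1−p)·μ₂} = ↑{μ₁} ⊕_p ↑{μ₂}`. -/
theorem upClo_mix {St : Type*} [Countable St]
    (p : ℝ) (hp0 : 0 ≤ p) (hp1 : p ≤ 1)
    (μ₁ μ₂ : Option St → ℝ) (h1 : IsDist μ₁) (h2 : IsDist μ₂) :
    upClo {fun σ => p * μ₁ σ + (1 - p) * μ₂ σ} = pchoice p (upClo {μ₁}) (upClo {μ₂}) :=
  upClo_mix_general p hp0 hp1 μ₁ μ₂ h1 h2

end DOL
end
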